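/- Let c^2 > 1, kappa > 0, and mu > 0 sufficiently small. Then there exists a unique omega_mu > 0 such that c^2 mu omega_mu^2 = lambda_mu^+(omega_mu). Moreover, sqrt(kappa(1+mu))/(|c| sqrt(mu)) ≤ omega_mu ≤ sqrt(lambda_mu^+(pi))/(|c| sqrt(mu)). -/

import Mathlib

noncomputable def Pmu (κ μ t : ℝ) : ℝ :=
  (κ - 2*t + 2)^2 * μ^2 + 2*κ*(κ + 2*t - 2)*μ + κ^2

noncomputable def lamPlus (κ μ K : ℝ) : ℝ :=
  κ/2 + μ*(κ/2 + 1 - Real.cos K) + Real.sqrt (Pmu κ μ (Real.cos K)) / 2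

/-!
With `t = cos K`, the identity `P_μ(t) = (κ + μ(κ + 2t - 2))² + 8κμ²(1 - t)` gives
`κ(1 + μ) ≤ λ ≤ λ(π)`, so the intermediate value theorem produces a root of `c²μω² - λ(ω)` between
the two claimed bounds. For uniqueness, `λ` is `O(μ)`-Lipschitz, while any two positive roots
`x ≠ y` satisfy `c²μ(x + y)|x - y| = |λ(x) - λ(y)|` with `x, y ≳ 1/√μ`; for small `μ` the left side
wins.
-/

open Real Set

lemma Pmu_eq_sq_add (κ μ t : ℝ) :
    Pmu κ μ t = (κ + μ * (κ + 2 * t - 2)) ^ 2 + 8 * κ * μ ^ 2 * (1 - t) := by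
  unfold Pmu; ring

lemma Pmu_sub_Pmu (κ μ s t : ℝ) :
    Pmu κ μ s - Pmu κ μ t = 4 * μ * (κ - μ * (κ + 2 - s - t)) * (s - t) := by
  unfold Pmu; ring

lemma continuous_lamPlus (κ μ : ℝ) : Continuous (lamPlus κ μ) := by
  unfold lamPlus Pmu; fun_prop

section Bounds

variable {κ μ : ℝ}

lemma le_sqrt_Pmu (hκ : 0 ≤ κ) {t : ℝ} (ht : t ≤ 1) :
    κ + μ * (κ + 2 * t - 2) ≤ √(Pmu κ μ t) := by
  refine (le_abs_self _).trans (abs_le_sqrt ?_)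
  have := sub_nonneg.2 ht
  rw [Pmu_eq_sq_add]
  exact le_add_of_nonneg_right (by positivity)

lemma Pmu_nonneg (hκ : 0 ≤ κ) {t : ℝ} (ht : t ≤ 1) : 0 ≤ Pmu κ μ t := by
  rw [Pmu_eq_sq_add]
  have := sub_nonneg.2 ht
  positivity

lemma mul_one_add_le_lamPlus (hκ : 0 ≤ κ) (K : ℝ) : κ * (1 + μ) ≤ lamPlus κ μ K := by
  have := le_sqrt_Pmu (μ := μ) hκ (cos_le_one K)
  unfold lamPlus; linarith

lemma lamPlus_le_lamPlus_pi (hκ : 0 ≤ κ) (hμ : 0 ≤ μ) (K : ℝ) :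
    lamPlus κ μ K ≤ lamPlus κ μ π := by
  set S := √(Pmu κ μ (-1))
  have hS : κ + μ * (κ - 4) ≤ S := by
    have := le_sqrt_Pmu (μ := μ) hκ (by norm_num : (-1 : ℝ) ≤ 1); linarith
  have hS2 : S ^ 2 = Pmu κ μ (-1) := sq_sqrt (Pmu_nonneg hκ (by norm_num))
  have hu : 0 ≤ 1 + cos K := by linarith [neg_one_le_cos K]
  -- `P_μ(t) - P_μ(-1)` is at most `4μ(1 + t)S + 4μ²(1 + t)²` because `κ - μ(κ + 4) ≤ S`.
  have key : √(Pmu κ μ (cos K)) ≤ S + 2 * μ * (1 + cos K) := by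
    rw [sqrt_le_left (by positivity)]
    have := mul_le_mul_of_nonneg_left hS (mul_nonneg hμ hu)
    unfold Pmu at hS2 ⊢
    nlinarith [mul_nonneg (mul_nonneg (mul_nonneg hμ hμ) hu) hκ]
  unfold lamPlus; rw [cos_pi]; linarith

lemma half_le_sqrt_Pmu (hκ : 0 ≤ κ) (hμ : 0 ≤ μ) (hμκ : μ ≤ κ / 8) {t : ℝ}
    (ht : t ∈ Icc (-1) 1) : κ / 2 ≤ √(Pmu κ μ t) := by
  have := le_sqrt_Pmu (μ := μ) hκ ht.2
  nlinarith [ht.1]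

lemma abs_sqrt_Pmu_sub_le (hκ : 0 < κ) (hμ : 0 ≤ μ) (hμ1 : μ ≤ 1) (hμκ : μ ≤ κ / 8)
    {s t : ℝ} (hs : s ∈ Icc (-1) 1) (ht : t ∈ Icc (-1) 1) :
    |√(Pmu κ μ s) - √(Pmu κ μ t)| ≤ μ * (8 + 16 / κ) * |s - t| := by
  have hsum : κ ≤ √(Pmu κ μ s) + √(Pmu κ μ t) := by
    linarith [half_le_sqrt_Pmu hκ.le hμ hμκ hs, half_le_sqrt_Pmu hκ.le hμ hμκ ht]
  have hdiff : |Pmu κ μ s - Pmu κ μ t| ≤ μ * (8 * κ + 16) * |s - t| := by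
    have h0 : 0 ≤ μ * (κ + 2 - s - t) := mul_nonneg hμ (by linarith [hs.2, ht.2])
    have h1 : μ * (κ + 2 - s - t) ≤ κ + 4 := by
      nlinarith [hs.1, ht.1, mul_le_mul_of_nonneg_right hμ1 (by linarith [hs.2, ht.2] :
        0 ≤ κ + 2 - s - t)]
    rw [Pmu_sub_Pmu, abs_mul, abs_mul, abs_of_nonneg (by positivity : 0 ≤ 4 * μ)]
    have : |κ - μ * (κ + 2 - s - t)| ≤ 2 * κ + 4 := abs_le.2 ⟨by linarith, by linarith⟩
    nlinarith [abs_nonneg (s - t), mul_le_mul_of_nonneg_left this hμ]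
  have hrat : |√(Pmu κ μ s) - √(Pmu κ μ t)| * κ ≤ |Pmu κ μ s - Pmu κ μ t| := by
    calc |√(Pmu κ μ s) - √(Pmu κ μ t)| * κ
        ≤ |√(Pmu κ μ s) - √(Pmu κ μ t)| * (√(Pmu κ μ s) + √(Pmu κ μ t)) := by gcongr
      _ = |(√(Pmu κ μ s) + √(Pmu κ μ t)) * (√(Pmu κ μ s) - √(Pmu κ μ t))| := by
        rw [abs_mul, abs_of_nonneg (by positivity : 0 ≤ √(Pmu κ μ s) + √(Pmu κ μ t)), mul_comm]
      _ = |Pmu κ μ s - Pmu κ μ t| := by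
        rw [← sq_sub_sq, sq_sqrt (Pmu_nonneg hκ.le hs.2), sq_sqrt (Pmu_nonneg hκ.le ht.2)]
  rw [show μ * (8 + 16 / κ) * |s - t| = μ * (8 * κ + 16) * |s - t| / κ by field_simp]
  exact (le_div_iff₀ hκ).2 (hrat.trans hdiff)

lemma abs_lamPlus_sub_le (hκ : 0 < κ) (hμ : 0 ≤ μ) (hμ1 : μ ≤ 1) (hμκ : μ ≤ κ / 8) (x y : ℝ) :
    |lamPlus κ μ x - lamPlus κ μ y| ≤ μ * (5 + 8 / κ) * |x - y| := by
  have hcos := abs_cos_sub_cos_le x y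
  have hsqrt := abs_sqrt_Pmu_sub_le hκ hμ hμ1 hμκ ⟨neg_one_le_cos x, cos_le_one x⟩
    ⟨neg_one_le_cos y, cos_le_one y⟩
  calc |lamPlus κ μ x - lamPlus κ μ y|
      = |-(μ * (cos x - cos y)) + (√(Pmu κ μ (cos x)) - √(Pmu κ μ (cos y))) / 2| := by
        unfold lamPlus; ring_nf
    _ ≤ μ * |cos x - cos y| + μ * (8 + 16 / κ) * |cos x - cos y| / 2 := by
        refine (abs_add_le _ _).trans (add_le_add ?_ ?_)
        · rw [abs_neg, abs_mul, abs_of_nonneg hμ]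
        · rw [abs_div, abs_two]; gcongr
    _ = μ * (5 + 8 / κ) * |cos x - cos y| := by ring
    _ ≤ μ * (5 + 8 / κ) * |x - y| := by gcongr

end Bounds

lemma exists_mul_sq_eq_mem_Icc {f : ℝ → ℝ} (hf : Continuous f) {a m M : ℝ} (ha : 0 < a)
    (hm : 0 ≤ m) (hfm : ∀ x, m ≤ f x) (hfM : ∀ x, f x ≤ M) :
    ∃ x ∈ Icc (√m / √a) (√M / √a), a * x ^ 2 = f x := by
  have hsq : ∀ b, 0 ≤ b → a * (√b / √a) ^ 2 = b := fun b hb => by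
    rw [div_pow, sq_sqrt hb, sq_sqrt ha.le]; field_simp
  have hmM : m ≤ M := (hfm 0).trans (hfM 0)
  have hle : √m / √a ≤ √M / √a := by gcongr
  obtain ⟨x, hx, hfx⟩ := intermediate_value_Icc hle
    (by fun_prop : Continuous fun x => a * x ^ 2 - f x).continuousOn
    (show (0 : ℝ) ∈ Icc _ _ from
      ⟨by linarith [hsq m hm, hfm (√m / √a)], by linarith [hsq M (hm.trans hmM), hfM (√M / √a)]⟩)
  exact ⟨x, hx, sub_eq_zero.1 hfx⟩

lemma eq_of_mul_sq_eq_of_abs_sub_le {f : ℝ → ℝ} {a M x y : ℝ}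
    (hf : |f x - f y| ≤ M * |x - y|) (hx : a * x ^ 2 = f x) (hy : a * y ^ 2 = f y)
    (hM : M < a * (x + y)) : x = y := by
  by_contra hne
  have hpos : 0 < |x - y| := abs_pos.2 (sub_ne_zero.2 hne)
  have h : |a * (x + y)| * |x - y| ≤ M * |x - y| := by
    rwa [← abs_mul, show a * (x + y) * (x - y) = f x - f y by rw [← hx, ← hy]; ring]
  linarith [le_abs_self (a * (x + y)), le_of_mul_le_mul_right h hpos]

lemma eq_of_mul_sq_eq_lamPlus {c κ μ : ℝ} (hc : 1 ≤ c ^ 2) (hκ : 0 < κ) (hμ : 0 < μ)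
    (hμ1 : μ ≤ 1) (hμκ : μ ≤ κ / 8) (hμL : μ * (5 + 8 / κ) ^ 2 < 4 * κ) {x y : ℝ}
    (hx : 0 < x) (hy : 0 < y) (hxsol : c ^ 2 * μ * x ^ 2 = lamPlus κ μ x)
    (hysol : c ^ 2 * μ * y ^ 2 = lamPlus κ μ y) : x = y := by
  -- every positive root satisfies `μ(c²ω)² ≥ c²κ ≥ κ > μ(L/2)²` with `L = 5 + 8/κ`
  have half_lt : ∀ ω, 0 < ω → c ^ 2 * μ * ω ^ 2 = lamPlus κ μ ω → (5 + 8 / κ) / 2 < c ^ 2 * ω := by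
    intro ω hω hsol
    have hκω : κ ≤ c ^ 2 * μ * ω ^ 2 := by
      rw [hsol]; nlinarith [mul_one_add_le_lamPlus (μ := μ) hκ.le ω]
    rw [← abs_of_pos (by positivity : 0 < c ^ 2 * ω)]
    refine (le_abs_self _).trans_lt (sq_lt_sq.1 ?_)
    nlinarith [mul_le_mul_of_nonneg_left hκω (by positivity : (0 : ℝ) ≤ c ^ 2)]
  refine eq_of_mul_sq_eq_of_abs_sub_le (abs_lamPlus_sub_le hκ hμ.le hμ1 hμκ x y) hxsol hysol ?_
  nlinarith [half_lt x hx hxsol, half_lt y hy hysol]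

/-- For `c^2 > 1`, `κ > 0`, and sufficiently small `μ > 0`, there is a unique
`ω_μ > 0` with `c^2 μ ω_μ^2 = λ_μ^+(ω_μ)`, and moreover
`sqrt (κ(1+μ)) / (|c| sqrt μ) ≤ ω_μ ≤ sqrt (λ_μ^+(π)) / (|c| sqrt μ)`. -/
theorem stmt5 (c κ : ℝ) (hc : 1 < c^2) (hκ : 0 < κ) :
    ∃ μ₀ > 0, ∀ μ : ℝ, 0 < μ → μ < μ₀ →
      ∃ ω : ℝ, (0 < ω ∧ c^2*μ*ω^2 = lamPlus κ μ ω ∧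
          Real.sqrt (κ*(1+μ)) / (|c| * Real.sqrt μ) ≤ ω ∧
          ω ≤ Real.sqrt (lamPlus κ μ Real.pi) / (|c| * Real.sqrt μ)) ∧
        (∀ ω' : ℝ, 0 < ω' → c^2*μ*ω'^2 = lamPlus κ μ ω' → ω' = ω) := by
  refine ⟨min (min 1 (κ / 8)) (4 * κ / (5 + 8 / κ) ^ 2), by positivity, fun μ hμ hμ₀ => ?_⟩
  obtain ⟨⟨hμ1, hμκ⟩, hμL⟩ := lt_min_iff.1 hμ₀ |>.imp_left lt_min_iff.1
  have hc0 : c ≠ 0 := by rintro rfl; norm_num at hc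
  obtain ⟨ω, ⟨hlo, hhi⟩, hsol⟩ := exists_mul_sq_eq_mem_Icc (continuous_lamPlus κ μ)
    (by positivity : 0 < c ^ 2 * μ) (by positivity) (mul_one_add_le_lamPlus hκ.le)
    (lamPlus_le_lamPlus_pi hκ.le hμ.le)
  rw [sqrt_mul (sq_nonneg c), sqrt_sq_eq_abs] at hlo hhi
  have hω : 0 < ω := lt_of_lt_of_le (by positivity) hlo
  refine ⟨ω, ⟨hω, hsol, hlo, hhi⟩, fun ω' hω' hsol' => ?_⟩
  exact eq_of_mul_sq_eq_lamPlus hc.le hκ hμ hμ1.le hμκ.le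
    ((lt_div_iff₀ (by positivity)).1 hμL) hω' hω hsol' hsol
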